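/- For every real κ̃ ≥ 1 and every λ ∈ (0, 1) with λ ≠ 1/(2κ̃) and λ ≠ 1/κ̃, the function λ ↦ √(1 − f(λ)² − g(λ)²) is differentiable at λ and the absolute value of its derivative is at most κ̃ / (2√3). -/

import Mathlib

/-- The filter function `f`: `f(λ) = 1/(2κ̃λ)` for `λ ≥ 1/κ̃`,
`f(λ) = -(1/2)cos(πκ̃λ)` for `1/(2κ̃) ≤ λ ≤ 1/κ̃`, and `f(λ) = 0` for `λ ≤ 1/(2κ̃)`. -/
noncomputable def ff (κ lam : ℝ) : ℝ :=
  if 1 / κ ≤ lam then 1 / (2 * κ * lam)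
  else if 1 / (2 * κ) ≤ lam then -(1 / 2) * Real.cos (Real.pi * κ * lam)
  else 0

/-- The filter function `g`: `g(λ) = 0` for `λ ≥ 1/κ̃`,
`g(λ) = (1/2)sin(πκ̃λ)` for `1/(2κ̃) ≤ λ ≤ 1/κ̃`, and `g(λ) = 1/2` for `λ ≤ 1/(2κ̃)`. -/
noncomputable def gg (κ lam : ℝ) : ℝ :=
  if 1 / κ ≤ lam then 0
  else if 1 / (2 * κ) ≤ lam then (1 / 2) * Real.sin (Real.pi * κ * lam)
  else 1 / 2

/-! Below `1/κ̃` both branches give `f² + g² = 1/4` (the middle one by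
`sin² + cos² = 1`), so the function is the constant `√(3/4)` there, even across `1/(2κ̃)`.
Beyond `1/κ̃` it is `φ(κ̃λ)` with `φ(t) = √(1 - 1/(4t²))`, and
`φ'(t) = 1/(4t³φ(t)) ≤ 1/(4·√3/2)` for `t ≥ 1`. -/

open Filter Topology

lemma ff_sq_add_gg_sq_of_lt_one_div {κ lam : ℝ} (h : lam < 1 / κ) :
    ff κ lam ^ 2 + gg κ lam ^ 2 = 1 / 4 := by
  have hfar : ¬ 1 / κ ≤ lam := not_le.2 h
  by_cases hmid : 1 / (2 * κ) ≤ lam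
  · simp only [ff, gg, hfar, hmid, if_false, if_true]
    linear_combination (1 / 4 : ℝ) * Real.sin_sq_add_cos_sq (Real.pi * κ * lam)
  · simp only [ff, gg, hfar, hmid, if_false]
    norm_num

lemma sqrt_one_sub_ff_sq_sub_gg_sq_of_one_div_le {κ lam : ℝ} (h : 1 / κ ≤ lam) :
    √(1 - ff κ lam ^ 2 - gg κ lam ^ 2) = √(1 - (2 * (κ * lam))⁻¹ ^ 2) := by
  simp only [ff, gg, h, if_true]
  ring_nf

lemma hasDerivAt_sqrt_one_sub_inv_two_mul_sq {t : ℝ} (ht : 1 / 2 < t) :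
    HasDerivAt (fun s : ℝ => √(1 - (2 * s)⁻¹ ^ 2))
      (4 * t ^ 3 * √(1 - (2 * t)⁻¹ ^ 2))⁻¹ t := by
  have ht0 : t ≠ 0 := by positivity
  have hinv : (2 * t)⁻¹ < 1 := inv_lt_one_of_one_lt₀ (by linarith)
  have hpos : 0 < 1 - (2 * t)⁻¹ ^ 2 := by nlinarith [inv_pos.2 (by linarith : (0 : ℝ) < 2 * t)]
  have hinner : HasDerivAt (fun s : ℝ => 1 - (2 * s)⁻¹ ^ 2) (2 * t ^ 3)⁻¹ t := by
    refine ((((hasDerivAt_id t).const_mul 2).inv (by simpa using ht0)).pow 2).const_sub 1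
      |>.congr_deriv ?_
    simp only [id, Pi.inv_apply]
    norm_num
    field_simp
  convert hinner.sqrt hpos.ne' using 1
  field_simp
  ring

lemma inv_four_mul_pow_three_mul_sqrt_le {t : ℝ} (ht : 1 ≤ t) :
    (4 * t ^ 3 * √(1 - (2 * t)⁻¹ ^ 2))⁻¹ ≤ (2 * √3)⁻¹ := by
  have hinv : (2 * t)⁻¹ ≤ 1 / 2 := by
    rw [inv_le_comm₀ (by positivity) (by norm_num)]
    linarith
  have hsqrt : √3 / 2 ≤ √(1 - (2 * t)⁻¹ ^ 2) := by
    rw [show √3 / 2 = √(3 / 4) by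
      rw [Real.sqrt_div' _ (by norm_num : (0 : ℝ) ≤ 4)]; norm_num]
    exact Real.sqrt_le_sqrt (by nlinarith [inv_pos.2 (by linarith : (0 : ℝ) < 2 * t)])
  have hcube : 1 ≤ t ^ 3 := one_le_pow₀ ht
  apply inv_anti₀ (by positivity)
  nlinarith [Real.sqrt_nonneg 3]

theorem stmt_11_general (κ : ℝ) (hκ : 1 ≤ κ) (lam : ℝ) (h2 : lam ≠ 1 / κ) :
    DifferentiableAt ℝ (fun l : ℝ => Real.sqrt (1 - ff κ l ^ 2 - gg κ l ^ 2)) lam ∧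
      |deriv (fun l : ℝ => Real.sqrt (1 - ff κ l ^ 2 - gg κ l ^ 2)) lam| ≤
        κ / (2 * Real.sqrt 3) := by
  suffices ∃ d, HasDerivAt (fun l : ℝ => √(1 - ff κ l ^ 2 - gg κ l ^ 2)) d lam ∧
      |d| ≤ κ / (2 * √3) by
    obtain ⟨d, hd, hbound⟩ := this
    exact ⟨hd.differentiableAt, hd.deriv ▸ hbound⟩
  rcases h2.lt_or_gt with hnear | hfar
  · refine ⟨0, (hasDerivAt_const lam √(3 / 4)).congr_of_eventuallyEq ?_,
      by rw [abs_zero]; positivity⟩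
    filter_upwards [Iio_mem_nhds hnear] with l hl
    rw [sub_sub, ff_sq_add_gg_sq_of_lt_one_div hl]
    norm_num
  · have hκlam : 1 < κ * lam := by rwa [div_lt_iff₀' (by positivity)] at hfar
    have hφ := (hasDerivAt_sqrt_one_sub_inv_two_mul_sq (by linarith : 1 / 2 < κ * lam)).comp lam
      ((hasDerivAt_id lam).const_mul κ)
    refine ⟨_, hφ.congr_of_eventuallyEq ?_, ?_⟩
    · filter_upwards [Ioi_mem_nhds hfar] with l hl
      exact sqrt_one_sub_ff_sq_sub_gg_sq_of_one_div_le hl.le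
    · rw [mul_one, abs_of_nonneg (by positivity), div_eq_mul_inv, mul_comm _ κ]
      exact mul_le_mul_of_nonneg_left (inv_four_mul_pow_three_mul_sqrt_le hκlam.le) (by positivity)

theorem stmt_11 (κ : ℝ) (hκ : 1 ≤ κ) (lam : ℝ) (hlam : lam ∈ Set.Ioo (0 : ℝ) 1)
    (h1 : lam ≠ 1 / (2 * κ)) (h2 : lam ≠ 1 / κ) :
    DifferentiableAt ℝ (fun l : ℝ => Real.sqrt (1 - ff κ l ^ 2 - gg κ l ^ 2)) lam ∧
      |deriv (fun l : ℝ => Real.sqrt (1 - ff κ l ^ 2 - gg κ l ^ 2)) lam| ≤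
        κ / (2 * Real.sqrt 3) :=
  stmt_11_general κ hκ lam h2
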